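/- Let 0 < φ < θ < π with θ ≠ π/2 and φ ≠ π/2, and let U = {1, e^{iθ}, e^{iφ}}. Then R(U) is a subring of ℂ if and only if the complex number tan θ/(tan θ − tan φ) + i·(tan φ · tan θ)/(tan θ − tan φ) is a quadratic integer, i.e., satisfies x² = λ·x + μ for some λ, μ ∈ ℤ. -/

import Mathlib

/-!
Write `lineInt α β p q = proj α β p + proj β α q`, where `proj α β` is the real-linear projection
onto `ℝβ` along `ℝα`. The point `x` is where the line `1 + ℝe^{iθ}` meets `ℝe^{iφ}`, so for every
pair of directions in `U` the projections of `1` and `x` lie in `ℤ + ℤx`; hence `R(U) ⊆ ℤ + ℤx`.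
Conversely `x`, then every integer, then every `a + bx` is reached by explicit intersections.
Thus `R(U) = ℤ + ℤx`, and this lattice is a ring exactly when `x² ∈ ℤ + ℤx`.
-/

open Complex

/-- The bracket `[x,y] = x * conj y - y * conj x`. -/
noncomputable def brkt (x y : ℂ) : ℂ := x * (starRingEnd ℂ) y - y * (starRingEnd ℂ) x

/-- `lineInt α β p q` is the intersection point `I_{α,β}(p,q)` of the line through `p`
with direction `α` and the line through `q` with direction `β` (for unit `α ≠ ±β`),
given by the formula of Buhler et al. -/
noncomputable def lineInt (α β p q : ℂ) : ℂ :=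
  brkt α p / brkt α β * β + brkt β q / brkt β α * α

/-- The sets `S n` in the inductive construction. -/
def stepSet (U : Set ℂ) : ℕ → Set ℂ
  | 0 => {0, 1}
  | n + 1 => {z | ∃ α ∈ U, ∃ β ∈ U, α ≠ β ∧ α ≠ -β ∧
      ∃ p ∈ stepSet U n, ∃ q ∈ stepSet U n, z = lineInt α β p q}

/-- `RU U = ⋃ n, S n`. -/
def RU (U : Set ℂ) : Set ℂ := ⋃ n, stepSet U n

/-- Elementary monomials of `U`. -/
def IsElem (U : Set ℂ) (z : ℂ) : Prop :=
  ∃ α ∈ U, ∃ β ∈ U, α ≠ β ∧ α ≠ -β ∧ z = lineInt α β 0 1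

/-- Monomials of `U`, defined inductively. -/
inductive IsMonomial (U : Set ℂ) : ℂ → Prop
  | elementary (α β : ℂ) (hα : α ∈ U) (hβ : β ∈ U) (h1 : α ≠ β) (h2 : α ≠ -β) :
      IsMonomial U (lineInt α β 0 1)
  | step (α β m : ℂ) (hα : α ∈ U) (hβ : β ∈ U) (h1 : α ≠ β) (h2 : α ≠ -β)
      (hm : IsMonomial U m) : IsMonomial U (lineInt α β 0 m)

/-- `P`: the real numbers arising as length-two monomials `I_{γ,δ}(0,z)` on the real axis. -/
def projSet (U : Set ℂ) : Set ℝ :=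
  {r | ∃ γ ∈ U, ∃ δ ∈ U, γ ≠ δ ∧ γ ≠ -δ ∧ ∃ z, IsElem U z ∧ (r : ℂ) = lineInt γ δ 0 z}

/-- `m` is a `ℤ[P]`-linear combination of elementary monomials of `U`. -/
def IsZPComb (U : Set ℂ) (m : ℂ) : Prop :=
  ∃ (n : ℕ) (c : Fin n → ℝ) (z : Fin n → ℂ),
    (∀ i, c i ∈ Subring.closure (projSet U)) ∧ (∀ i, IsElem U (z i)) ∧
    m = ∑ i, (c i : ℂ) * z i

section Bracket

variable {α β : ℂ}

theorem brkt_self (z : ℂ) : brkt z z = 0 := by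
  simp [brkt]

theorem brkt_comm (α β : ℂ) : brkt β α = -brkt α β := by
  simp only [brkt]; ring

theorem ne_of_brkt_ne_zero (h : brkt α β ≠ 0) : α ≠ β := by
  rintro rfl; exact h (brkt_self α)

theorem ne_neg_of_brkt_ne_zero (h : brkt α β ≠ 0) : α ≠ -β := by
  rintro rfl; exact h (by simp only [brkt, map_neg]; ring)

theorem brkt_exp_mul_I (a b : ℝ) :
    brkt (exp (a * I)) (exp (b * I)) = 2 * I * (Real.sin (a - b) : ℂ) := by
  simp only [brkt, exp_mul_I, ← ofReal_cos, ← ofReal_sin, map_add, map_mul, conj_ofReal, conj_I,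
    Real.sin_sub]
  push_cast
  ring

theorem brkt_exp_mul_I_ne_zero {a b : ℝ} (hba : b < a) (hab : a < b + Real.pi) :
    brkt (exp (a * I)) (exp (b * I)) ≠ 0 := by
  rw [brkt_exp_mul_I]
  have : 0 < Real.sin (a - b) := Real.sin_pos_of_pos_of_lt_pi (by linarith) (by linarith)
  exact mul_ne_zero (mul_ne_zero two_ne_zero I_ne_zero) (ofReal_ne_zero.mpr this.ne')

/-- The `β`-component of `p` in the real basis `α, β`. -/
noncomputable def proj (α β : ℂ) : ℂ →ₗ[ℝ] ℂ where
  toFun p := brkt α p / brkt α β * β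
  map_add' p q := by simp only [brkt, map_add]; ring
  map_smul' r p := by simp only [brkt, real_smul, map_mul, conj_ofReal, RingHom.id_apply]; ring

theorem lineInt_eq_proj_add_proj (α β p q : ℂ) : lineInt α β p q = proj α β p + proj β α q :=
  rfl

theorem lineInt_comm (α β p q : ℂ) : lineInt α β p q = lineInt β α q p :=
  add_comm _ _

theorem proj_ofReal_mul_add_ofReal_mul (h : brkt α β ≠ 0) (s t : ℝ) :
    proj α β (s * α + t * β) = t * β := by
  have : brkt α (s * α + t * β) = t * brkt α β := by
    simp only [brkt, map_add, map_mul, conj_ofReal]; ring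
  simp only [proj, LinearMap.coe_mk, AddHom.coe_mk, this, mul_div_assoc, div_self h, mul_one]

theorem proj_add_proj_swap (h : brkt α β ≠ 0) (p : ℂ) : proj α β p + proj β α p = p := by
  have h' : brkt β α ≠ 0 := by rwa [brkt_comm, neg_ne_zero]
  simp only [proj, LinearMap.coe_mk, AddHom.coe_mk]
  field_simp
  simp only [brkt]
  ring

theorem lineInt_self (h : brkt α β ≠ 0) (p : ℂ) : lineInt α β p p = p :=
  proj_add_proj_swap h p

theorem lineInt_add_mul_add_mul (h : brkt α β ≠ 0) (a b c d : ℝ) (x : ℂ) :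
    lineInt α β (a + b * x) (c + d * x) =
      a * proj α β 1 + b * proj α β x + c * (1 - proj α β 1) + d * (x - proj α β x) := by
  have hswap : ∀ p, proj β α p = p - proj α β p := fun p ↦
    eq_sub_of_add_eq' (proj_add_proj_swap h p)
  have hlin : ∀ r : ℝ, ∀ z, proj α β (r * z) = r * proj α β z := fun r z ↦ by
    simpa only [real_smul] using (proj α β).map_smul r z
  rw [lineInt_eq_proj_add_proj, hswap, map_add, map_add, hlin, hlin, ← mul_one (a : ℂ),
    ← mul_one (c : ℂ), hlin, hlin]
  ring

end Bracket

section Construction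

variable {U : Set ℂ}

theorem stepSet_monotone {α β : ℂ} (hα : α ∈ U) (hβ : β ∈ U) (h : brkt α β ≠ 0) :
    Monotone (stepSet U) :=
  monotone_nat_of_le_succ fun _ p hp ↦
    ⟨α, hα, β, hβ, ne_of_brkt_ne_zero h, ne_neg_of_brkt_ne_zero h, p, hp, p, hp,
      (lineInt_self h p).symm⟩

theorem zero_mem_RU : (0 : ℂ) ∈ RU U :=
  Set.mem_iUnion.mpr ⟨0, Or.inl rfl⟩

theorem one_mem_RU : (1 : ℂ) ∈ RU U :=
  Set.mem_iUnion.mpr ⟨0, Or.inr rfl⟩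

theorem lineInt_mem_RU (hmono : Monotone (stepSet U)) {α β p q : ℂ} (hα : α ∈ U) (hβ : β ∈ U)
    (h : brkt α β ≠ 0) (hp : p ∈ RU U) (hq : q ∈ RU U) : lineInt α β p q ∈ RU U := by
  obtain ⟨m, hm⟩ := Set.mem_iUnion.mp hp
  obtain ⟨n, hn⟩ := Set.mem_iUnion.mp hq
  exact Set.mem_iUnion.mpr ⟨max m n + 1, α, hα, β, hβ, ne_of_brkt_ne_zero h,
    ne_neg_of_brkt_ne_zero h, p, hmono (le_max_left m n) hm, q, hmono (le_max_right m n) hn, rfl⟩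

theorem RU_subset {L : Set ℂ} (h0 : 0 ∈ L) (h1 : 1 ∈ L)
    (hL : ∀ α ∈ U, ∀ β ∈ U, α ≠ β → ∀ p ∈ L, ∀ q ∈ L, lineInt α β p q ∈ L) : RU U ⊆ L := by
  refine Set.iUnion_subset fun n ↦ ?_
  induction n with
  | zero => rintro z (rfl | rfl) <;> assumption
  | succ n ih =>
    rintro z ⟨α, hα, β, hβ, hne, -, p, hp, q, hq, rfl⟩
    exact hL α hα β hβ hne p (ih hp) q (ih hq)

end Construction

def intLattice {R : Type*} [Ring R] (x : R) : Set R :=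
  {z | ∃ a b : ℤ, z = a + b * x}

theorem exists_subring_coe_eq_intLattice_iff {R : Type*} [CommRing R] (x : R) :
    (∃ A : Subring R, (A : Set R) = intLattice x) ↔ ∃ lam mu : ℤ, x ^ 2 = lam * x + mu := by
  constructor
  · rintro ⟨A, hA⟩
    have hx : x ∈ A := by rw [← SetLike.mem_coe, hA]; exact ⟨0, 1, by simp⟩
    obtain ⟨a, b, hab⟩ : x * x ∈ intLattice x := hA ▸ mul_mem hx hx
    exact ⟨b, a, by rw [sq, hab, add_comm]⟩
  · rintro ⟨lam, mu, hq⟩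
    refine ⟨{ carrier := intLattice x
              zero_mem' := ⟨0, 0, by simp⟩
              one_mem' := ⟨1, 0, by simp⟩
              add_mem' := ?add
              neg_mem' := ?neg
              mul_mem' := ?mul }, rfl⟩
    case add =>
      rintro _ _ ⟨a, b, rfl⟩ ⟨c, d, rfl⟩
      exact ⟨a + c, b + d, by push_cast; ring⟩
    case neg =>
      rintro _ ⟨a, b, rfl⟩
      exact ⟨-a, -b, by push_cast; ring⟩
    case mul =>
      rintro _ _ ⟨a, b, rfl⟩ ⟨c, d, rfl⟩
      exact ⟨a * c + b * d * mu, a * d + b * c + b * d * lam, by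
        push_cast; linear_combination (b * d : R) * hq⟩

namespace ThreeDirections

variable {u v x : ℂ} {s t : ℝ}

theorem lineInt_u_one (hu : brkt u 1 ≠ 0) (hxu : x = 1 + t * u) (a b c d : ℤ) :
    lineInt u 1 (a + b * x) (c + d * x) = ↑(a + b - d) + d * x := by
  have h1 : proj u 1 1 = 1 := by
    simpa using proj_ofReal_mul_add_ofReal_mul hu 0 1
  have hx : proj u 1 x = 1 := by
    simpa [hxu, add_comm] using proj_ofReal_mul_add_ofReal_mul hu t 1
  have := lineInt_add_mul_add_mul hu a b c d x
  push_cast at this ⊢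
  rw [this, h1, hx]
  ring

theorem lineInt_v_one (hv : brkt v 1 ≠ 0) (hxv : x = s * v) (a b c d : ℤ) :
    lineInt v 1 (a + b * x) (c + d * x) = a + d * x := by
  have h1 : proj v 1 1 = 1 := by
    simpa using proj_ofReal_mul_add_ofReal_mul hv 0 1
  have hx : proj v 1 x = 0 := by
    simpa [hxv] using proj_ofReal_mul_add_ofReal_mul hv s 0
  have := lineInt_add_mul_add_mul hv a b c d x
  push_cast at this ⊢
  rw [this, h1, hx]
  ring

theorem lineInt_u_v (huv : brkt u v ≠ 0) (hxv : x = s * v) (hxu : x = 1 + t * u)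
    (a b c d : ℤ) : lineInt u v (a + b * x) (c + d * x) = c + ↑(a + b - c) * x := by
  have h1 : proj u v 1 = x := by
    have : (1 : ℂ) = ↑(-t) * u + s * v := by rw [← hxv, hxu]; push_cast; ring
    rw [this, proj_ofReal_mul_add_ofReal_mul huv, hxv]
  have hx : proj u v x = x := by
    simpa [← hxv] using proj_ofReal_mul_add_ofReal_mul huv 0 s
  have := lineInt_add_mul_add_mul huv a b c d x
  push_cast at this ⊢
  rw [this, h1, hx]
  ring

theorem lineInt_mem_intLattice (hu : brkt u 1 ≠ 0) (hv : brkt v 1 ≠ 0) (huv : brkt u v ≠ 0)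
    (hxv : x = s * v) (hxu : x = 1 + t * u) :
    ∀ α ∈ ({1, u, v} : Set ℂ), ∀ β ∈ ({1, u, v} : Set ℂ), α ≠ β →
      ∀ p ∈ intLattice x, ∀ q ∈ intLattice x, lineInt α β p q ∈ intLattice x := by
  rintro α hα β hβ hne _ ⟨a, b, rfl⟩ _ ⟨c, d, rfl⟩
  simp only [Set.mem_insert_iff, Set.mem_singleton_iff] at hα hβ
  rcases hα with rfl | rfl | rfl <;> rcases hβ with rfl | rfl | rfl <;>
    first
    | exact absurd rfl hne
    | exact ⟨_, _, lineInt_u_one hu hxu a b c d⟩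
    | exact ⟨_, _, lineInt_v_one hv hxv a b c d⟩
    | exact ⟨_, _, lineInt_u_v huv hxv hxu a b c d⟩
    | exact ⟨_, _, (lineInt_comm _ _ _ _).trans (lineInt_u_one hu hxu c d a b)⟩
    | exact ⟨_, _, (lineInt_comm _ _ _ _).trans (lineInt_v_one hv hxv c d a b)⟩
    | exact ⟨_, _, (lineInt_comm _ _ _ _).trans (lineInt_u_v huv hxv hxu c d a b)⟩

theorem intCast_mem_RU (hu : brkt u 1 ≠ 0) (hv : brkt v 1 ≠ 0) (huv : brkt u v ≠ 0)
    (hxv : x = s * v) (hxu : x = 1 + t * u) (n : ℤ) : (n : ℂ) ∈ RU {1, u, v} := by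
  have hmono := stepSet_monotone (U := {1, u, v}) (by simp) (by simp) hu
  have closed_u_one := fun {p q} ↦ lineInt_mem_RU (p := p) (q := q) hmono (by simp) (by simp) hu
  have closed_v_one := fun {p q} ↦ lineInt_mem_RU (p := p) (q := q) hmono (by simp) (by simp) hv
  have hx : x ∈ RU {1, u, v} := by
    convert lineInt_mem_RU hmono (by simp) (by simp) huv one_mem_RU zero_mem_RU using 1
    simpa using (lineInt_u_v huv hxv hxu 1 0 0 0).symm
  have hadd_x : ∀ n : ℤ, (n : ℂ) ∈ RU {1, u, v} → n + x ∈ RU {1, u, v} := fun n hn ↦ by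
    convert closed_v_one hn hx using 1
    simpa using (lineInt_v_one hv hxv n 0 0 1).symm
  induction n using Int.induction_on with
  | zero => simpa using zero_mem_RU
  | succ n hn =>
    convert closed_u_one (hadd_x n hn) zero_mem_RU using 1
    simpa using (lineInt_u_one hu hxu n 1 0 0).symm
  | pred n hn =>
    have hsub_x : ((-n - 1 : ℤ) : ℂ) + x ∈ RU {1, u, v} := by
      convert closed_u_one hn hx using 1
      simpa using (lineInt_u_one hu hxu (-n) 0 0 1).symm
    convert closed_v_one hsub_x zero_mem_RU using 1
    simpa using (lineInt_v_one hv hxv (-n - 1) 1 0 0).symm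

theorem intLattice_subset_RU (hu : brkt u 1 ≠ 0) (hv : brkt v 1 ≠ 0) (huv : brkt u v ≠ 0)
    (hxv : x = s * v) (hxu : x = 1 + t * u) : intLattice x ⊆ RU {1, u, v} := by
  rintro _ ⟨a, b, rfl⟩
  have hmono := stepSet_monotone (U := {1, u, v}) (by simp) (by simp) hu
  have hint := intCast_mem_RU hu hv huv hxv hxu
  convert lineInt_mem_RU hmono (by simp) (by simp) huv (hint (a + b)) (hint a) using 1
  simpa using (lineInt_u_v huv hxv hxu (a + b) 0 a 0).symm

theorem RU_eq_intLattice (hu : brkt u 1 ≠ 0) (hv : brkt v 1 ≠ 0) (huv : brkt u v ≠ 0)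
    (hxv : x = s * v) (hxu : x = 1 + t * u) : RU {1, u, v} = intLattice x :=
  (RU_subset (L := intLattice x) ⟨0, 0, by simp⟩ ⟨1, 0, by simp⟩
    (lineInt_mem_intLattice hu hv huv hxv hxu)).antisymm (intLattice_subset_RU hu hv huv hxv hxu)

end ThreeDirections

theorem Real.cos_ne_zero_of_ne_pi_div_two {θ : ℝ} (h0 : 0 < θ) (hπ : θ < Real.pi)
    (h : θ ≠ Real.pi / 2) : Real.cos θ ≠ 0 := fun hcos ↦
  h <| Real.injOn_cos ⟨h0.le, hπ.le⟩ ⟨by positivity, by linarith [Real.pi_pos]⟩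
    (hcos.trans Real.cos_pi_div_two.symm)

theorem Real.tan_sub_tan_ne_zero {θ φ : ℝ} (hθ : Real.cos θ ≠ 0) (hφ : Real.cos φ ≠ 0)
    (hsin : Real.sin (θ - φ) ≠ 0) : Real.tan θ - Real.tan φ ≠ 0 := by
  rwa [Real.tan_eq_sin_div_cos, Real.tan_eq_sin_div_cos, div_sub_div _ _ hθ hφ,
    div_ne_zero_iff, ← Real.sin_sub, and_iff_left (mul_ne_zero hθ hφ)]

theorem Complex.exp_ofReal_mul_I_eq_cos_mul {θ : ℝ} (hθ : Real.cos θ ≠ 0) :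
    exp (θ * I) = Real.cos θ * (1 + Real.tan θ * I) := by
  have : (Real.cos θ : ℂ) ≠ 0 := ofReal_ne_zero.mpr hθ
  rw [exp_mul_I, ← ofReal_cos, ← ofReal_sin, Real.tan_eq_sin_div_cos, ofReal_div]
  field_simp

theorem exists_eq_ofReal_mul_exp_of_eq_tan {θ φ : ℝ} {x : ℂ} (hθ : Real.cos θ ≠ 0)
    (hφ : Real.cos φ ≠ 0) (hne : Real.tan θ - Real.tan φ ≠ 0)
    (hx : x = ((Real.tan θ / (Real.tan θ - Real.tan φ) : ℝ) : ℂ) +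
      Complex.I * ((Real.tan φ * Real.tan θ / (Real.tan θ - Real.tan φ) : ℝ) : ℂ)) :
    (∃ s : ℝ, x = s * exp (φ * I)) ∧ ∃ t : ℝ, x = 1 + t * exp (θ * I) := by
  have hθ' : (Real.cos θ : ℂ) ≠ 0 := ofReal_ne_zero.mpr hθ
  have hφ' : (Real.cos φ : ℂ) ≠ 0 := ofReal_ne_zero.mpr hφ
  have hne' : (Real.tan θ - Real.tan φ : ℂ) ≠ 0 := by exact_mod_cast hne
  refine ⟨⟨Real.tan θ / (Real.tan θ - Real.tan φ) / Real.cos φ, ?_⟩,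
    ⟨Real.tan φ / (Real.tan θ - Real.tan φ) / Real.cos θ, ?_⟩⟩ <;>
  · rw [hx, exp_ofReal_mul_I_eq_cos_mul ‹_›]
    simp only [ofReal_div, ofReal_mul, ofReal_sub]
    field_simp <;> ring

/-- for `0 < φ < θ < π` with `θ, φ ≠ π/2` and `U = {1, e^{iθ}, e^{iφ}}`,
`R(U)` is a subring of `ℂ` iff
`tan θ/(tan θ − tan φ) + i·(tan φ·tan θ)/(tan θ − tan φ)` is a quadratic integer. -/
theorem stmt8 (θ φ : ℝ) (h0 : 0 < φ) (hφθ : φ < θ) (hθπ : θ < Real.pi)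
    (hθ2 : θ ≠ Real.pi / 2) (hφ2 : φ ≠ Real.pi / 2)
    (x : ℂ)
    (hx : x = ((Real.tan θ / (Real.tan θ - Real.tan φ) : ℝ) : ℂ) +
      Complex.I * ((Real.tan φ * Real.tan θ / (Real.tan θ - Real.tan φ) : ℝ) : ℂ)) :
    (∃ A : Subring ℂ, (A : Set ℂ) =
        RU {1, Complex.exp ((θ : ℂ) * Complex.I), Complex.exp ((φ : ℂ) * Complex.I)}) ↔
      ∃ lam mu : ℤ, x ^ 2 = (lam : ℂ) * x + (mu : ℂ) := by
  have hθ0 : 0 < θ := h0.trans hφθ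
  have hcosθ := Real.cos_ne_zero_of_ne_pi_div_two hθ0 hθπ hθ2
  have hcosφ := Real.cos_ne_zero_of_ne_pi_div_two h0 (hφθ.trans hθπ) hφ2
  have hu : brkt (exp (θ * I)) 1 ≠ 0 := by
    simpa using brkt_exp_mul_I_ne_zero (b := 0) hθ0 (by linarith)
  have hv : brkt (exp (φ * I)) 1 ≠ 0 := by
    simpa using brkt_exp_mul_I_ne_zero (b := 0) h0 (by linarith)
  have huv : brkt (exp (θ * I)) (exp (φ * I)) ≠ 0 := brkt_exp_mul_I_ne_zero hφθ (by linarith)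
  have htan : Real.tan θ - Real.tan φ ≠ 0 := Real.tan_sub_tan_ne_zero hcosθ hcosφ
    (Real.sin_pos_of_pos_of_lt_pi (sub_pos.2 hφθ) (by linarith)).ne'
  obtain ⟨⟨s, hxv⟩, t, hxu⟩ := exists_eq_ofReal_mul_exp_of_eq_tan hcosθ hcosφ htan hx
  rw [ThreeDirections.RU_eq_intLattice hu hv huv hxv hxu]
  exact exists_subring_coe_eq_intLattice_iff x
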